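/- Let d ≥ 2 and let ρ be a d×d complex density matrix (positive semidefinite with trace 1), with diagonal entries ρ_ii. Then the geometric measure of coherence satisfies the lower bound: 1 - 1/d - ((d-1)/d)·√(1 - (d/(d-1))·(Tr(ρ²) - Σ_{i=1}^d ρ_ii²)) ≤ C_g(ρ). -/

import Mathlib

open scoped ComplexOrder

open Matrix Classical in
/-- The positive semidefinite square root of a matrix (junk value `0` if not PSD). -/
noncomputable def msqrt {d : ℕ} (A : Matrix (Fin d) (Fin d) ℂ) : Matrix (Fin d) (Fin d) ℂ :=
  if h : A.PosSemidef then
    (h.1.eigenvectorUnitary : Matrix (Fin d) (Fin d) ℂ) *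
      diagonal ((↑) ∘ Real.sqrt ∘ h.1.eigenvalues) *
      (star (h.1.eigenvectorUnitary : Matrix (Fin d) (Fin d) ℂ))
  else 0

/-- A density matrix: positive semidefinite with trace 1. -/
def IsDensity {d : ℕ} (ρ : Matrix (Fin d) (Fin d) ℂ) : Prop :=
  ρ.PosSemidef ∧ ρ.trace = 1

/-- An incoherent state: a diagonal density matrix. -/
def IsIncoherent {d : ℕ} (σ : Matrix (Fin d) (Fin d) ℂ) : Prop :=
  IsDensity σ ∧ σ.IsDiag

/-- The fidelity `F(ρ,σ) = (Tr √(√σ ρ √σ))²`. -/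
noncomputable def fid {d : ℕ} (ρ σ : Matrix (Fin d) (Fin d) ℂ) : ℝ :=
  ((msqrt (msqrt σ * ρ * msqrt σ)).trace.re) ^ 2

/-- The geometric measure of coherence `C_g(ρ) = 1 - sup {F(ρ,σ) : σ incoherent}`. -/
noncomputable def Cg {d : ℕ} (ρ : Matrix (Fin d) (Fin d) ℂ) : ℝ :=
  1 - sSup {x : ℝ | ∃ σ : Matrix (Fin d) (Fin d) ℂ, IsIncoherent σ ∧ x = fid ρ σ}


set_option linter.unusedSectionVars false
set_option linter.unusedVariables false
set_option maxHeartbeats 1000000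

namespace Matrix.PosSemidef

variable {n : Type*} [Fintype n] [DecidableEq n]

/-- The positive semidefinite square root (port of the removed Mathlib definition). -/
noncomputable def sqrt {A : Matrix n n ℂ} (hA : A.PosSemidef) : Matrix n n ℂ :=
  (hA.1.eigenvectorUnitary : Matrix n n ℂ) *
    Matrix.diagonal ((↑) ∘ Real.sqrt ∘ hA.1.eigenvalues) *
    (star (hA.1.eigenvectorUnitary : Matrix n n ℂ))

open scoped MatrixOrder in
lemma sqrt_eq_cfc {A : Matrix n n ℂ} (hA : A.PosSemidef) : hA.sqrt = CFC.sqrt A := by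
  rw [CFC.sqrt_eq_real_sqrt A hA.nonneg, cfcₙ_eq_cfc, hA.1.cfc_eq, IsHermitian.cfc,
    Unitary.conjStarAlgAut_apply]
  rfl

open scoped MatrixOrder in
lemma posSemidef_sqrt {A : Matrix n n ℂ} (hA : A.PosSemidef) : hA.sqrt.PosSemidef := by
  rw [sqrt_eq_cfc]
  exact Matrix.nonneg_iff_posSemidef.mp (CFC.sqrt_nonneg A)

open scoped MatrixOrder in
lemma sqrt_mul_self {A : Matrix n n ℂ} (hA : A.PosSemidef) : hA.sqrt * hA.sqrt = A := by
  rw [sqrt_eq_cfc]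
  exact CFC.sqrt_mul_sqrt_self A hA.nonneg

open scoped MatrixOrder in
lemma eq_sqrt_of_sq_eq {A : Matrix n n ℂ} (hA : A.PosSemidef) {B : Matrix n n ℂ}
    (hB : B.PosSemidef) (h : A ^ 2 = B) : A = hB.sqrt := by
  rw [sqrt_eq_cfc]
  exact (CFC.sqrt_unique (by rw [← h, sq]) hA.nonneg).symm

end Matrix.PosSemidef

namespace CoherenceAux

open Matrix
open scoped Kronecker

variable {n : Type*} [Fintype n] [DecidableEq n]

lemma complex_nonneg_iff {z : ℂ} : 0 ≤ z ↔ 0 ≤ z.re ∧ z.im = 0 := by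
  rw [Complex.le_def]; simp [eq_comm]

/-- dot product of star with self: real and nonneg -/
lemma dot_star_self_re_nonneg (x : n → ℂ) : 0 ≤ (dotProduct (star x) x).re := by
  have := dotProduct_star_self_nonneg x
  exact (complex_nonneg_iff.mp this).1

lemma dot_star_self_re_eq (x : n → ℂ) :
    (dotProduct (star x) x).re = ∑ i, ‖x i‖ ^ 2 := by
  simp only [dotProduct, Pi.star_apply, Complex.re_sum]
  refine Finset.sum_congr rfl fun i _ => ?_
  rw [show (star (x i) * x i) = (starRingEnd ℂ) (x i) * x i from rfl]
  rw [mul_comm, Complex.mul_conj]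
  simp [Complex.sq_norm]

/-- Cauchy-Schwarz for the complex dot product. -/
lemma re_dot_le_norm_mul_norm (a b : n → ℂ) :
    (dotProduct (star a) b).re ≤
      Real.sqrt (dotProduct (star a) a).re * Real.sqrt (dotProduct (star b) b).re := by
  have h1 : (dotProduct (star a) b).re ≤ ∑ i, ‖a i‖ * ‖b i‖ := by
    calc (dotProduct (star a) b).re ≤ ‖dotProduct (star a) b‖ :=
          Complex.re_le_norm _
    _ ≤ ∑ i, ‖star (a i) * b i‖ := by
        simpa [dotProduct] using norm_sum_le Finset.univ (fun i => star (a i) * b i)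
    _ = ∑ i, ‖a i‖ * ‖b i‖ := by
        simp [_root_.map_mul]
  refine h1.trans ?_
  rw [dot_star_self_re_eq, dot_star_self_re_eq]
  exact Real.sum_mul_le_sqrt_mul_sqrt _ _ _


lemma psd_apply_self_nonneg {M : Matrix n n ℂ} (hM : M.PosSemidef) (i : n) : 0 ≤ M i i := by
  have := hM.dotProduct_mulVec_nonneg (Pi.single i 1)
  simpa [dotProduct, Matrix.mulVec, Pi.single_apply, Finset.sum_ite_eq] using this

lemma psd_trace_nonneg {M : Matrix n n ℂ} (hM : M.PosSemidef) : 0 ≤ M.trace := by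
  unfold Matrix.trace
  exact Finset.sum_nonneg fun i _ => psd_apply_self_nonneg hM i

lemma psd_trace_re_nonneg {M : Matrix n n ℂ} (hM : M.PosSemidef) : 0 ≤ M.trace.re :=
  (complex_nonneg_iff.mp (psd_trace_nonneg hM)).1

lemma psd_trace_im {M : Matrix n n ℂ} (hM : M.PosSemidef) : M.trace.im = 0 :=
  (complex_nonneg_iff.mp (psd_trace_nonneg hM)).2

lemma vecMulVec_mul_vecMulVec (a b c e : n → ℂ) :
    (vecMulVec a b : Matrix n n ℂ) * vecMulVec c e = dotProduct b c • vecMulVec a e := by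
  ext i j
  simp only [Matrix.mul_apply, vecMulVec_apply, Matrix.smul_apply, dotProduct,
    smul_eq_mul, Finset.sum_mul]
  exact Finset.sum_congr rfl fun k _ => by ring

lemma trace_mul_vecMulVec (W : Matrix n n ℂ) (u : n → ℂ) :
    (W * vecMulVec u (star u)).trace = dotProduct (star u) (W *ᵥ u) := by
  simp only [Matrix.trace, Matrix.diag, Matrix.mul_apply, vecMulVec_apply, dotProduct,
    Matrix.mulVec, Pi.star_apply, Finset.mul_sum, Finset.sum_mul]
  refine Finset.sum_congr rfl fun i _ => ?_
  refine Finset.sum_congr rfl fun j _ => by ring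

lemma vecMulVec_star_conjTranspose (u : n → ℂ) :
    (vecMulVec u (star u) : Matrix n n ℂ)ᴴ = vecMulVec u (star u) := by
  ext i j
  simp [vecMulVec_apply, Matrix.conjTranspose_apply, mul_comm]

/-- Bessel-type bound: sum over an orthonormal family of diagonal expectations of a PSD matrix
is at most the trace. -/
lemma sum_orthonormal_exp_le_trace {W : Matrix n n ℂ} (hW : W.PosSemidef)
    (t : Finset n) (u : n → n → ℂ)
    (hu : ∀ i ∈ t, ∀ j ∈ t, dotProduct (star (u i)) (u j) = if i = j then 1 else 0) :
    ∑ i ∈ t, (dotProduct (star (u i)) (W *ᵥ u i)).re ≤ W.trace.re := by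
  set Pp : Matrix n n ℂ := ∑ i ∈ t, vecMulVec (u i) (star (u i)) with hPp
  have hPpherm : Ppᴴ = Pp := by
    rw [hPp, Matrix.conjTranspose_sum]
    exact Finset.sum_congr rfl fun i _ => vecMulVec_star_conjTranspose _
  have hPpproj : Pp * Pp = Pp := by
    rw [hPp, Finset.sum_mul_sum]
    rw [Finset.sum_congr rfl (fun i hi => Finset.sum_congr rfl
      (fun j hj => by rw [vecMulVec_mul_vecMulVec, hu i hi j hj]))]
    simp only [ite_smul, one_smul, zero_smul]
    refine Finset.sum_congr rfl fun i hi => ?_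
    rw [Finset.sum_ite_eq t i (fun j => vecMulVec (u i) (star (u j))), if_pos hi]
  have hsum : ∑ i ∈ t, (dotProduct (star (u i)) (W *ᵥ u i)).re = (W * Pp).trace.re := by
    rw [hPp, Finset.mul_sum, Matrix.trace_sum, Complex.re_sum]
    exact (Finset.sum_congr rfl fun i _ => by rw [trace_mul_vecMulVec]).symm
  rw [hsum]
  have hQ : ((1 - Pp)ᴴ * W * (1 - Pp)).PosSemidef := hW.conjTranspose_mul_mul_same (1 - Pp)
  have hQherm : (1 - Pp)ᴴ = 1 - Pp := by
    rw [Matrix.conjTranspose_sub, hPpherm, Matrix.conjTranspose_one]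
  rw [hQherm] at hQ
  have htr : ((1 - Pp) * W * (1 - Pp)).trace = W.trace - (W * Pp).trace := by
    have h2 : ((1 - Pp) * W * (1 - Pp)).trace = (W * ((1 - Pp) * (1 - Pp))).trace := by
      rw [Matrix.trace_mul_cycle, Matrix.trace_mul_comm]
    have h3 : (1 - Pp) * (1 - Pp) = 1 - Pp := by
      rw [sub_mul, mul_sub, mul_sub, hPpproj]
      simp
    rw [h2, h3, Matrix.mul_sub, Matrix.trace_sub, Matrix.mul_one]
  have := psd_trace_re_nonneg hQ
  rw [htr] at this
  simp only [Complex.sub_re] at this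
  linarith


lemma dot_mulVec_mulVec (M : Matrix n n ℂ) (x y : n → ℂ) :
    dotProduct (star (M *ᵥ x)) (M *ᵥ y)
      = dotProduct (star x) ((Mᴴ * M) *ᵥ y) := by
  rw [Matrix.star_mulVec, ← Matrix.mulVec_mulVec, Matrix.dotProduct_mulVec,
    Matrix.vecMul_vecMul, ← Matrix.dotProduct_mulVec, Matrix.mulVec_mulVec]

lemma re_psd_dot_nonneg {W : Matrix n n ℂ} (hW : W.PosSemidef) (x : n → ℂ) :
    0 ≤ (dotProduct (star x) (W *ᵥ x)).re :=
  (complex_nonneg_iff.mp (hW.dotProduct_mulVec_nonneg x)).1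

/-- Trace-norm Cauchy–Schwarz : `Tr √((FG)ᴴ (FG)) ≤ ‖F‖₂ ‖G‖₂`. -/
lemma trace_sqrt_mul_le (F G : Matrix n n ℂ)
    (hH : ((F * G)ᴴ * (F * G)).PosSemidef) :
    hH.sqrt.trace.re ≤
      Real.sqrt ((Fᴴ * F).trace.re) * Real.sqrt ((Gᴴ * G).trace.re) := by
  set Y := F * G with hY
  have hRm : (Yᴴ * Y).IsHermitian := hH.1
  set U : Matrix n n ℂ := (hRm.eigenvectorUnitary : Matrix n n ℂ) with hUdef
  set ev : n → ℝ := hRm.eigenvalues with hevdef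
  have hUU : star U * U = 1 := mem_unitaryGroup_iff'.mp hRm.eigenvectorUnitary.2
  have hUUc : Uᴴ * U = 1 := hUU
  have hev_nonneg : ∀ i, 0 ≤ ev i := hH.eigenvalues_nonneg
  -- trace of the square root
  have h1 : hH.sqrt.trace = ∑ i, (Real.sqrt (ev i) : ℂ) := by
    show (U * diagonal (RCLike.ofReal ∘ Real.sqrt ∘ ev) * star U).trace = _
    rw [Matrix.trace_mul_cycle, hUU, Matrix.one_mul, Matrix.trace_diagonal]
    rfl
  have h1' : hH.sqrt.trace.re = ∑ i, Real.sqrt (ev i) := by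
    rw [h1, Complex.re_sum]
    exact Finset.sum_congr rfl fun i _ => Complex.ofReal_re _
  -- columns of U
  set v : n → n → ℂ := fun i k => U k i with hvdef
  have horth : ∀ i j, dotProduct (star (v i)) (v j) = if i = j then 1 else 0 := by
    intro i j
    have h := congrFun (congrFun hUUc i) j
    simpa [Matrix.mul_apply, dotProduct, Matrix.conjTranspose_apply,
      Matrix.one_apply, hvdef] using h
  have hHU : (Yᴴ * Y) * U = U * diagonal (RCLike.ofReal ∘ ev) := by
    conv_lhs => rw [hRm.spectral_theorem, Unitary.conjStarAlgAut_apply]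
    rw [Matrix.mul_assoc, Matrix.mul_assoc, hUU, Matrix.mul_one]
  have hHv : ∀ i, (Yᴴ * Y) *ᵥ v i = (ev i : ℂ) • v i := by
    intro i
    funext k
    have h := congrFun (congrFun hHU k) i
    rw [Matrix.mul_diagonal] at h
    have e1 : ((Yᴴ * Y) *ᵥ v i) k = ((Yᴴ * Y) * U) k i := by
      simp [Matrix.mulVec, Matrix.mul_apply, dotProduct, hvdef]
    rw [e1, h]
    show U k i * RCLike.ofReal (ev i) = (ev i : ℂ) * U k i
    rw [mul_comm]
    rfl
  have hYdot : ∀ i j, dotProduct (star (Y *ᵥ v i)) (Y *ᵥ v j)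
      = if i = j then (ev j : ℂ) else 0 := by
    intro i j
    rw [dot_mulVec_mulVec, hHv j, dotProduct_smul, horth i j]
    by_cases h : i = j <;> simp [h]
  -- support of eigenvalues
  set t : Finset n := Finset.univ.filter (fun i => ev i ≠ 0) with htdef
  have hsum_t : ∑ i, Real.sqrt (ev i) = ∑ i ∈ t, Real.sqrt (ev i) := by
    refine (Finset.sum_filter_of_ne fun i _ hs => ?_).symm
    intro h0
    exact hs (by rw [h0, Real.sqrt_zero])
  -- normalized vectors
  set u : n → n → ℂ := fun i => ((Real.sqrt (ev i) : ℂ))⁻¹ • (Y *ᵥ v i) with hudef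
  have hev_pos : ∀ i ∈ t, 0 < ev i := by
    intro i hi
    rcases (Finset.mem_filter.mp hi) with ⟨_, hne⟩
    exact lt_of_le_of_ne (hev_nonneg i) (Ne.symm hne)
  have hs_pos : ∀ i ∈ t, 0 < Real.sqrt (ev i) := fun i hi => Real.sqrt_pos.mpr (hev_pos i hi)
  have hu_orth : ∀ i ∈ t, ∀ j ∈ t,
      dotProduct (star (u i)) (u j) = if i = j then 1 else 0 := by
    intro i hi j hj
    rw [hudef]
    simp only [star_smul, smul_dotProduct, dotProduct_smul]
    rw [hYdot i j]
    rcases eq_or_ne i j with h | h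
    · subst h
      have hr : (Real.sqrt (ev i))⁻¹ * ((Real.sqrt (ev i))⁻¹ * ev i) = 1 := by
        rw [← mul_assoc, ← mul_inv, Real.mul_self_sqrt (hev_nonneg i)]
        exact inv_mul_cancel₀ (ne_of_gt (hev_pos i hi))
      simp only [if_pos rfl, eq_self_iff_true, if_true, smul_eq_mul, star_inv₀,
        RCLike.star_def, Complex.conj_ofReal]
      norm_cast
    · simp [h]
  -- the three sums
  set a : n → n → ℂ := fun i => Fᴴ *ᵥ u i with hadef
  set b : n → n → ℂ := fun i => G *ᵥ v i with hbdef
  have hs_eq : ∀ i ∈ t, Real.sqrt (ev i) = (dotProduct (star (a i)) (b i)).re := by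
    intro i hi
    have e1 : dotProduct (star (a i)) (b i)
        = dotProduct (star (u i)) (Y *ᵥ v i) := by
      rw [hadef]
      simp only
      rw [Matrix.star_mulVec, Matrix.conjTranspose_conjTranspose,
        ← Matrix.dotProduct_mulVec, Matrix.mulVec_mulVec]
    rw [e1, hudef]
    simp only [star_smul, smul_dotProduct, smul_eq_mul]
    rw [hYdot i i, if_pos rfl]
    simp only [star_inv₀, RCLike.star_def, Complex.conj_ofReal]
    rw [← Complex.ofReal_inv, ← Complex.ofReal_mul, Complex.ofReal_re]
    rw [show (Real.sqrt (ev i))⁻¹ * ev i = Real.sqrt (ev i) from by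
      rw [← Real.mul_self_sqrt (hev_nonneg i)]
      field_simp
      rw [Real.sqrt_sq (Real.sqrt_nonneg _), pow_two, mul_div_assoc,
        div_self (ne_of_gt (hs_pos i hi)), mul_one]]
  -- Cauchy–Schwarz chain
  have step1 : ∑ i ∈ t, Real.sqrt (ev i) ≤
      ∑ i ∈ t, Real.sqrt (dotProduct (star (a i)) (a i)).re *
        Real.sqrt (dotProduct (star (b i)) (b i)).re := by
    refine Finset.sum_le_sum fun i hi => ?_
    rw [hs_eq i hi]
    exact re_dot_le_norm_mul_norm _ _
  have step2 : ∑ i ∈ t, Real.sqrt (dotProduct (star (a i)) (a i)).re *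
        Real.sqrt (dotProduct (star (b i)) (b i)).re ≤
      Real.sqrt (∑ i ∈ t, (dotProduct (star (a i)) (a i)).re) *
        Real.sqrt (∑ i ∈ t, (dotProduct (star (b i)) (b i)).re) := by
    have := Real.sum_sqrt_mul_sqrt_le t
      (f := fun i => (dotProduct (star (a i)) (a i)).re)
      (g := fun i => (dotProduct (star (b i)) (b i)).re)
      (fun i => dot_star_self_re_nonneg _) (fun i => dot_star_self_re_nonneg _)
    exact this
  have ha_bound : ∑ i ∈ t, (dotProduct (star (a i)) (a i)).re
      ≤ ((Fᴴ * F).trace).re := by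
    have e : ∀ i, dotProduct (star (a i)) (a i)
        = dotProduct (star (u i)) ((F * Fᴴ) *ᵥ u i) := by
      intro i
      rw [hadef]
      simp only
      rw [dot_mulVec_mulVec, Matrix.conjTranspose_conjTranspose]
    have h2 : ∑ i ∈ t, (dotProduct (star (u i)) ((F * Fᴴ) *ᵥ u i)).re
        ≤ ((F * Fᴴ).trace).re :=
      sum_orthonormal_exp_le_trace (Matrix.posSemidef_self_mul_conjTranspose F) t u hu_orth
    rw [Matrix.trace_mul_comm] at h2
    calc ∑ i ∈ t, (dotProduct (star (a i)) (a i)).re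
        = ∑ i ∈ t, (dotProduct (star (u i)) ((F * Fᴴ) *ᵥ u i)).re :=
          Finset.sum_congr rfl fun i _ => by rw [e i]
      _ ≤ _ := h2
  have hb_bound : ∑ i ∈ t, (dotProduct (star (b i)) (b i)).re
      ≤ ((Gᴴ * G).trace).re := by
    have e : ∀ i, dotProduct (star (b i)) (b i)
        = dotProduct (star (v i)) ((Gᴴ * G) *ᵥ v i) := fun i => dot_mulVec_mulVec _ _ _
    have h2 : ∑ i ∈ t, (dotProduct (star (v i)) ((Gᴴ * G) *ᵥ v i)).re
        ≤ ((Gᴴ * G).trace).re :=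
      sum_orthonormal_exp_le_trace (Matrix.posSemidef_conjTranspose_mul_self G) t v
        (fun i _ j _ => horth i j)
    calc ∑ i ∈ t, (dotProduct (star (b i)) (b i)).re
        = ∑ i ∈ t, (dotProduct (star (v i)) ((Gᴴ * G) *ᵥ v i)).re :=
          Finset.sum_congr rfl fun i _ => by rw [e i]
      _ ≤ _ := h2
  -- assemble
  rw [h1', hsum_t]
  refine (step1.trans step2).trans ?_
  have hnn : ∀ (s : Finset n) (f : n → ℝ), (∀ i, 0 ≤ f i) → 0 ≤ ∑ i ∈ s, f i :=
    fun s f hf => Finset.sum_nonneg fun i _ => hf i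
  exact mul_le_mul (Real.sqrt_le_sqrt ha_bound) (Real.sqrt_le_sqrt hb_bound)
    (Real.sqrt_nonneg _) (Real.sqrt_nonneg _)

/-- The swap operator on the doubled space. -/
def swapM (n : Type*) [Fintype n] [DecidableEq n] : Matrix (n × n) (n × n) ℂ :=
  Matrix.of fun p q => if p.1 = q.2 ∧ p.2 = q.1 then (1 : ℂ) else 0

lemma swapM_mul_swapM : swapM n * swapM n = 1 := by
  ext ⟨i, j⟩ ⟨k, l⟩
  simp [swapM, Matrix.mul_apply, Fintype.sum_prod_type, ite_and, Matrix.one_apply,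
    Prod.ext_iff, and_comm]

lemma swapM_conjTranspose : (swapM n)ᴴ = swapM n := by
  ext ⟨i, j⟩ ⟨k, l⟩
  simp [swapM, Matrix.conjTranspose_apply, and_comm]
  split <;> split <;> simp_all

lemma swapM_mul_kron (A B : Matrix n n ℂ) :
    swapM n * (A ⊗ₖ B) = (B ⊗ₖ A) * swapM n := by
  ext ⟨i, j⟩ ⟨k, l⟩
  simp [swapM, Matrix.mul_apply, Fintype.sum_prod_type, ite_and,
    Matrix.kroneckerMap_apply, mul_comm]

lemma trace_kron_mul_swapM (A B : Matrix n n ℂ) :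
    ((A ⊗ₖ B) * swapM n).trace = (A * B).trace := by
  simp only [Matrix.trace, Matrix.diag, Matrix.mul_apply, swapM, Matrix.kroneckerMap_apply,
    Matrix.of_apply, Fintype.sum_prod_type, ite_and]
  simp [Finset.sum_ite_eq, mul_comm]

lemma kron_conjTranspose (A B : Matrix n n ℂ) : (A ⊗ₖ B)ᴴ = Aᴴ ⊗ₖ Bᴴ := by
  ext ⟨i, j⟩ ⟨k, l⟩
  simp [Matrix.conjTranspose_apply, Matrix.kroneckerMap_apply]

lemma kron_posSemidef {A : Matrix n n ℂ} (hA : A.PosSemidef) : (A ⊗ₖ A).PosSemidef := by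
  obtain ⟨B, hB⟩ : ∃ B : Matrix n n ℂ, A = Bᴴ * B :=
    ⟨hA.sqrt, by rw [show hA.sqrtᴴ = hA.sqrt from hA.posSemidef_sqrt.1, hA.sqrt_mul_self]⟩
  rw [hB, Matrix.mul_kronecker_mul, ← kron_conjTranspose]
  exact Matrix.posSemidef_conjTranspose_mul_self _


/-- The doubled-space projection onto the antisymmetric subspace. -/
noncomputable def Pk (n : Type*) [Fintype n] [DecidableEq n] : Matrix (n × n) (n × n) ℂ :=
  (1/2 : ℂ) • (1 - swapM n)

lemma Pk_herm : (Pk n)ᴴ = Pk n := by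
  unfold Pk
  rw [Matrix.conjTranspose_smul, Matrix.conjTranspose_sub, swapM_conjTranspose,
    Matrix.conjTranspose_one]
  congr 1
  simp

lemma sub_swap_sq : (1 - swapM n) * (1 - swapM n) = (2:ℂ) • (1 - swapM n) := by
  rw [sub_mul, one_mul, mul_sub, mul_one, swapM_mul_swapM, two_smul]
  abel

lemma Pk_idem : Pk n * Pk n = Pk n := by
  unfold Pk
  rw [Matrix.smul_mul, Matrix.mul_smul, sub_swap_sq, smul_smul, smul_smul]
  norm_num

lemma Pk_comm_kron (A : Matrix n n ℂ) : Pk n * (A ⊗ₖ A) = (A ⊗ₖ A) * Pk n := by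
  unfold Pk
  rw [Matrix.smul_mul, Matrix.mul_smul, sub_mul, mul_sub, one_mul, mul_one, swapM_mul_kron]

lemma trace_kron_Pk (A : Matrix n n ℂ) :
    ((A ⊗ₖ A) * Pk n).trace = (1/2 : ℂ) * (A.trace ^ 2 - (A * A).trace) := by
  unfold Pk
  rw [Matrix.mul_smul, Matrix.trace_smul, Matrix.mul_sub, Matrix.mul_one, Matrix.trace_sub,
    Matrix.trace_kronecker, trace_kron_mul_swapM, smul_eq_mul, pow_two]

lemma proj_sandwich_sq {m : Type*} [Fintype m] [DecidableEq m] {P X : Matrix m m ℂ}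
    (hP : P * P = P) (hcomm : P * X = X * P) :
    (P * X * P) * (P * X * P) = P * (X * X) * P := by
  have h2 : P * (X * P) = X * P := by rw [← Matrix.mul_assoc, hcomm, Matrix.mul_assoc, hP]
  calc (P * X * P) * (P * X * P) = P * (X * (P * (P * (X * P)))) := by
        simp only [Matrix.mul_assoc]
    _ = P * (X * (X * P)) := by rw [← Matrix.mul_assoc P P, hP, h2]
    _ = P * (X * X) * P := by simp only [Matrix.mul_assoc]

lemma half_re (z w : ℂ) (hz : z.im = 0) (hw : w.im = 0) :
    ((1/2:ℂ) * (z^2 - w)).re = 1/2 * (z.re^2 - w.re) := by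
  simp only [Complex.mul_re, Complex.mul_im, Complex.sub_re, Complex.sub_im, pow_two, hz, hw]
  norm_num

/-- Superfidelity upper bound on fidelity (unnormalized form). -/
lemma superfidelity {ρ σ : Matrix n n ℂ} (hρ : ρ.PosSemidef) (hσ : σ.PosSemidef)
    (hM : (hσ.sqrt * ρ * hσ.sqrt).PosSemidef) :
    hM.sqrt.trace.re ^ 2 ≤ ((ρ * σ).trace).re
      + Real.sqrt (ρ.trace.re ^ 2 - ((ρ * ρ).trace).re)
        * Real.sqrt (σ.trace.re ^ 2 - ((σ * σ).trace).re) := by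
  set A := hρ.sqrt with hAdef
  set B := hσ.sqrt with hBdef
  have hA : A.PosSemidef := hρ.posSemidef_sqrt
  have hB : B.PosSemidef := hσ.posSemidef_sqrt
  have hAh : Aᴴ = A := hA.1
  have hBh : Bᴴ = B := hB.1
  have hAA : A * A = ρ := hρ.sqrt_mul_self
  have hBB : B * B = σ := hσ.sqrt_mul_self
  set M := B * ρ * B with hMdef
  set C := hM.sqrt with hCdef
  have hC : C.PosSemidef := hM.posSemidef_sqrt
  have hCC : C * C = M := hM.sqrt_mul_self
  set F := (A ⊗ₖ A) * Pk n with hFdef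
  set G := (B ⊗ₖ B) * Pk n with hGdef
  have hFG : F * G = ((A * B) ⊗ₖ (A * B)) * Pk n := by
    rw [hFdef, hGdef]
    have h1 : (A ⊗ₖ A) * Pk n * ((B ⊗ₖ B) * Pk n)
        = (A ⊗ₖ A) * ((Pk n * (B ⊗ₖ B)) * Pk n) := by simp only [Matrix.mul_assoc]
    rw [h1, Pk_comm_kron, Matrix.mul_assoc, Pk_idem, ← Matrix.mul_assoc,
      ← Matrix.mul_kronecker_mul]
  have hXX : (A * B)ᴴ * (A * B) = M := by
    rw [Matrix.conjTranspose_mul, hAh, hBh, hMdef]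
    calc B * A * (A * B) = B * (A * A) * B := by
          rw [Matrix.mul_assoc, ← Matrix.mul_assoc A A B, ← Matrix.mul_assoc]
      _ = B * ρ * B := by rw [hAA]
  have hprod : (F * G)ᴴ * (F * G) = Pk n * (M ⊗ₖ M) * Pk n := by
    rw [hFG, Matrix.conjTranspose_mul, Pk_herm, kron_conjTranspose]
    have h1 : Pk n * ((A * B)ᴴ ⊗ₖ (A * B)ᴴ) * (((A * B) ⊗ₖ (A * B)) * Pk n)
        = Pk n * ((((A * B)ᴴ ⊗ₖ (A * B)ᴴ) * ((A * B) ⊗ₖ (A * B))) * Pk n) := by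
      simp only [Matrix.mul_assoc]
    rw [h1, ← Matrix.mul_kronecker_mul, hXX, ← Matrix.mul_assoc]
  have hPSDW : ((F * G)ᴴ * (F * G)).PosSemidef := Matrix.posSemidef_conjTranspose_mul_self _
  have hPCCP : (Pk n * (C ⊗ₖ C) * Pk n).PosSemidef := by
    have := (kron_posSemidef hC).mul_mul_conjTranspose_same (Pk n)
    rwa [Pk_herm] at this
  have hsq : (Pk n * (C ⊗ₖ C) * Pk n) ^ 2 = (F * G)ᴴ * (F * G) := by
    rw [pow_two, proj_sandwich_sq Pk_idem (Pk_comm_kron C), ← Matrix.mul_kronecker_mul,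
      hCC, hprod]
  have hsqrt_eq : Pk n * (C ⊗ₖ C) * Pk n = hPSDW.sqrt := hPCCP.eq_sqrt_of_sq_eq hPSDW hsq
  have htr1 : hPSDW.sqrt.trace = (1/2:ℂ) * (C.trace ^ 2 - M.trace) := by
    rw [← hsqrt_eq, Matrix.trace_mul_cycle, Pk_idem,
      Matrix.trace_mul_comm, trace_kron_Pk, hCC]
  have htr2 : (Fᴴ * F).trace = (1/2:ℂ) * (ρ.trace ^ 2 - (ρ * ρ).trace) := by
    have hFF : Fᴴ * F = Pk n * (ρ ⊗ₖ ρ) * Pk n := by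
      rw [hFdef, Matrix.conjTranspose_mul, Pk_herm, kron_conjTranspose, hAh]
      have h1 : Pk n * (A ⊗ₖ A) * ((A ⊗ₖ A) * Pk n)
          = Pk n * (((A ⊗ₖ A) * (A ⊗ₖ A)) * Pk n) := by simp only [Matrix.mul_assoc]
      rw [h1, ← Matrix.mul_kronecker_mul, hAA, ← Matrix.mul_assoc]
    rw [hFF, Matrix.trace_mul_cycle, Pk_idem,
      Matrix.trace_mul_comm, trace_kron_Pk]
  have htr3 : (Gᴴ * G).trace = (1/2:ℂ) * (σ.trace ^ 2 - (σ * σ).trace) := by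
    have hGG : Gᴴ * G = Pk n * (σ ⊗ₖ σ) * Pk n := by
      rw [hGdef, Matrix.conjTranspose_mul, Pk_herm, kron_conjTranspose, hBh]
      have h1 : Pk n * (B ⊗ₖ B) * ((B ⊗ₖ B) * Pk n)
          = Pk n * (((B ⊗ₖ B) * (B ⊗ₖ B)) * Pk n) := by simp only [Matrix.mul_assoc]
      rw [h1, ← Matrix.mul_kronecker_mul, hBB, ← Matrix.mul_assoc]
    rw [hGG, Matrix.trace_mul_cycle, Pk_idem,
      Matrix.trace_mul_comm, trace_kron_Pk]
  -- real parts
  have hρρ : (ρ * ρ).PosSemidef := by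
    have h2 : ρᴴ * ρ = ρ * ρ := by rw [hρ.1]
    rw [← h2]; exact Matrix.posSemidef_conjTranspose_mul_self ρ
  have hσσ : (σ * σ).PosSemidef := by
    have h2 : σᴴ * σ = σ * σ := by rw [hσ.1]
    rw [← h2]; exact Matrix.posSemidef_conjTranspose_mul_self σ
  have hre1 : hPSDW.sqrt.trace.re = 1/2 * (C.trace.re ^ 2 - M.trace.re) := by
    rw [htr1, half_re _ _ (psd_trace_im hC) (psd_trace_im hM)]
  have hre2 : (Fᴴ * F).trace.re = 1/2 * (ρ.trace.re ^ 2 - (ρ * ρ).trace.re) := by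
    rw [htr2, half_re _ _ (psd_trace_im hρ) (psd_trace_im hρρ)]
  have hre3 : (Gᴴ * G).trace.re = 1/2 * (σ.trace.re ^ 2 - (σ * σ).trace.re) := by
    rw [htr3, half_re _ _ (psd_trace_im hσ) (psd_trace_im hσσ)]
  set X := ρ.trace.re ^ 2 - (ρ * ρ).trace.re with hXdef
  set Yv := σ.trace.re ^ 2 - (σ * σ).trace.re with hYdef
  have hXnn : 0 ≤ X := by
    have := psd_trace_re_nonneg (Matrix.posSemidef_conjTranspose_mul_self F)
    rw [hre2] at this; linarith
  have hYnn : 0 ≤ Yv := by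
    have := psd_trace_re_nonneg (Matrix.posSemidef_conjTranspose_mul_self G)
    rw [hre3] at this; linarith
  have hmain := trace_sqrt_mul_le F G hPSDW
  rw [hre1, hre2, hre3] at hmain
  have hsqrtprod : Real.sqrt (1/2 * X) * Real.sqrt (1/2 * Yv)
      = 1/2 * (Real.sqrt X * Real.sqrt Yv) := by
    rw [Real.sqrt_mul (by norm_num : (0:ℝ) ≤ 1/2), Real.sqrt_mul (by norm_num : (0:ℝ) ≤ 1/2)]
    rw [show Real.sqrt (1/2) * Real.sqrt X * (Real.sqrt (1/2) * Real.sqrt Yv)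
        = (Real.sqrt (1/2) * Real.sqrt (1/2)) * (Real.sqrt X * Real.sqrt Yv) from by ring]
    rw [Real.mul_self_sqrt (by norm_num : (0:ℝ) ≤ 1/2)]
  rw [hsqrtprod] at hmain
  -- M trace = (ρ σ) trace
  have hMtr : M.trace = (ρ * σ).trace := by
    rw [hMdef, Matrix.trace_mul_comm, ← Matrix.mul_assoc, hBB, Matrix.trace_mul_comm]
  have hCtr_nonneg : 0 ≤ C.trace.re := psd_trace_re_nonneg hC
  -- conclude : (TrC)² ≤ TrM + √X √Y
  have hfinal : C.trace.re ^ 2 ≤ M.trace.re + Real.sqrt X * Real.sqrt Yv := by nlinarith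
  rw [hMtr] at hfinal
  exact hfinal


lemma trace_sq_le {n : Type*} [Fintype n] [DecidableEq n]
    {ρ : Matrix n n ℂ} (hρ : ρ.PosSemidef) : ((ρ * ρ).trace).re ≤ ρ.trace.re ^ 2 := by
  set A := hρ.sqrt with hAdef
  have hA : A.PosSemidef := hρ.posSemidef_sqrt
  have hAh : Aᴴ = A := hA.1
  have hAA : A * A = ρ := hρ.sqrt_mul_self
  set F := (A ⊗ₖ A) * Pk n with hFdef
  have hFF : Fᴴ * F = Pk n * (ρ ⊗ₖ ρ) * Pk n := by
    rw [hFdef, Matrix.conjTranspose_mul, Pk_herm, kron_conjTranspose, hAh]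
    have h1 : Pk n * (A ⊗ₖ A) * ((A ⊗ₖ A) * Pk n)
        = Pk n * (((A ⊗ₖ A) * (A ⊗ₖ A)) * Pk n) := by simp only [Matrix.mul_assoc]
    rw [h1, ← Matrix.mul_kronecker_mul, hAA, ← Matrix.mul_assoc]
  have htr2 : (Fᴴ * F).trace = (1/2:ℂ) * (ρ.trace ^ 2 - (ρ * ρ).trace) := by
    rw [hFF, Matrix.trace_mul_cycle, Pk_idem, Matrix.trace_mul_comm, trace_kron_Pk]
  have hρρ : (ρ * ρ).PosSemidef := by
    have h2 : ρᴴ * ρ = ρ * ρ := by rw [hρ.1]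
    rw [← h2]; exact Matrix.posSemidef_conjTranspose_mul_self ρ
  have hre2 : (Fᴴ * F).trace.re = 1/2 * (ρ.trace.re ^ 2 - (ρ * ρ).trace.re) := by
    rw [htr2, half_re _ _ (psd_trace_im hρ) (psd_trace_im hρρ)]
  have h := psd_trace_re_nonneg (Matrix.posSemidef_conjTranspose_mul_self F)
  rw [hre2] at h
  linarith

lemma scalar_opt {d : ℕ} (hd : 2 ≤ d) (r p : Fin d → ℝ)
    (hr0 : ∀ i, 0 ≤ r i) (hp0 : ∀ i, 0 ≤ p i)
    (hr1 : ∑ i, r i = 1) (hp1 : ∑ i, p i = 1)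
    (R : ℝ) (hRge : ∑ i, (r i)^2 ≤ R) (hRle : R ≤ 1) :
    ∑ i, r i * p i + Real.sqrt (1 - R) * Real.sqrt (1 - ∑ i, (p i)^2)
      ≤ 1/(d:ℝ) + (((d:ℝ)-1)/d) *
          Real.sqrt (1 - ((d:ℝ)/((d:ℝ)-1)) * (R - ∑ i, (r i)^2)) := by
  have hd2 : (2:ℝ) ≤ (d:ℝ) := by exact_mod_cast hd
  have hdpos : (0:ℝ) < d := by linarith
  have hdne : (d:ℝ) ≠ 0 := ne_of_gt hdpos
  have hd1pos : (0:ℝ) < (d:ℝ) - 1 := by linarith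
  set c : ℝ := 1/(d:ℝ) with hc
  have hcd : (d:ℝ) * (c * c) = c := by rw [hc]; field_simp
  -- lower bounds on sums of squares
  have cs_r : (1:ℝ) ≤ (∑ i, (r i)^2) * d := by
    have := Finset.sum_mul_sq_le_sq_mul_sq Finset.univ r (fun _ => (1:ℝ))
    simpa [hr1, Finset.card_univ] using this
  have hSr_ge : c ≤ ∑ i, (r i)^2 := by
    rw [hc, div_le_iff₀ hdpos]; linarith
  have cs_p : (1:ℝ) ≤ (∑ i, (p i)^2) * d := by
    have := Finset.sum_mul_sq_le_sq_mul_sq Finset.univ p (fun _ => (1:ℝ))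
    simpa [hp1, Finset.card_univ] using this
  have hSp_ge : c ≤ ∑ i, (p i)^2 := by
    rw [hc, div_le_iff₀ hdpos]; linarith
  have hSp_le : ∑ i, (p i)^2 ≤ 1 := by
    have := Finset.sum_sq_le_sq_sum_of_nonneg (fun i (_ : i ∈ Finset.univ) => hp0 i)
    rw [hp1] at this
    simpa using this
  -- step A
  have expandA : ∑ i, (r i - c) * (p i - c) = ∑ i, r i * p i - c := by
    have h1 : ∀ i, (r i - c) * (p i - c) = r i * p i - c * r i - c * p i + c * c := by
      intro i; ring
    rw [Finset.sum_congr rfl fun i _ => h1 i]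
    simp only [Finset.sum_add_distrib, Finset.sum_sub_distrib, ← Finset.mul_sum, hr1, hp1,
      Finset.sum_const, Finset.card_univ, Fintype.card_fin, nsmul_eq_mul]
    ring_nf
    rw [show c ^ 2 * (d:ℝ) = c from by rw [pow_two, mul_comm]; exact hcd]
    ring
  have expandR : ∑ i, (r i - c)^2 = ∑ i, (r i)^2 - c := by
    have h1 : ∀ i, (r i - c)^2 = (r i)^2 - 2 * c * r i + c * c := by intro i; ring
    rw [Finset.sum_congr rfl fun i _ => h1 i]
    simp only [Finset.sum_add_distrib, Finset.sum_sub_distrib, ← Finset.mul_sum, hr1,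
      Finset.sum_const, Finset.card_univ, Fintype.card_fin, nsmul_eq_mul]
    ring_nf
    rw [show c ^ 2 * (d:ℝ) = c from by rw [pow_two, mul_comm]; exact hcd]
    ring
  have expandP : ∑ i, (p i - c)^2 = ∑ i, (p i)^2 - c := by
    have h1 : ∀ i, (p i - c)^2 = (p i)^2 - 2 * c * p i + c * c := by intro i; ring
    rw [Finset.sum_congr rfl fun i _ => h1 i]
    simp only [Finset.sum_add_distrib, Finset.sum_sub_distrib, ← Finset.mul_sum, hp1,
      Finset.sum_const, Finset.card_univ, Fintype.card_fin, nsmul_eq_mul]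
    ring_nf
    rw [show c ^ 2 * (d:ℝ) = c from by rw [pow_two, mul_comm]; exact hcd]
    ring
  have stepA : ∑ i, r i * p i ≤ c +
      Real.sqrt (∑ i, (r i)^2 - c) * Real.sqrt (∑ i, (p i)^2 - c) := by
    have hcs := Real.sum_mul_le_sqrt_mul_sqrt Finset.univ (fun i => r i - c) (fun i => p i - c)
    rw [expandA] at hcs
    simp only [expandR, expandP] at hcs
    linarith
  -- step B : two-dimensional Cauchy-Schwarz
  set Sr := ∑ i, (r i)^2 with hSr
  set Sp := ∑ i, (p i)^2 with hSp
  set a := Real.sqrt (Sr - c) with ha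
  set b := Real.sqrt (1 - R) with hb
  set t := Real.sqrt (Sp - c) with ht
  set s := Real.sqrt (1 - Sp) with hs
  have ha2 : a^2 = Sr - c := Real.sq_sqrt (by linarith)
  have hb2 : b^2 = 1 - R := Real.sq_sqrt (by linarith)
  have ht2 : t^2 = Sp - c := Real.sq_sqrt (by linarith)
  have hs2 : s^2 = 1 - Sp := Real.sq_sqrt (by linarith)
  have hann : 0 ≤ a := Real.sqrt_nonneg _
  have hbnn : 0 ≤ b := Real.sqrt_nonneg _
  have htnn : 0 ≤ t := Real.sqrt_nonneg _
  have hsnn : 0 ≤ s := Real.sqrt_nonneg _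
  have hsq2 : (a*t + b*s)^2 ≤ (a^2 + b^2) * (t^2 + s^2) := by
    nlinarith [sq_nonneg (a*s - b*t)]
  have hts : t^2 + s^2 = 1 - c := by rw [ht2, hs2]; ring
  have stepB : a*t + b*s ≤ Real.sqrt (a^2 + b^2) * Real.sqrt (1 - c) := by
    have h0 : 0 ≤ a*t + b*s := by positivity
    have h1 : (a*t + b*s)^2 ≤ (a^2+b^2) * (1-c) := by rw [← hts]; exact hsq2
    calc a*t + b*s = Real.sqrt ((a*t + b*s)^2) := (Real.sqrt_sq h0).symm
      _ ≤ Real.sqrt ((a^2+b^2) * (1-c)) := Real.sqrt_le_sqrt h1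
      _ = Real.sqrt (a^2+b^2) * Real.sqrt (1-c) := Real.sqrt_mul (by nlinarith) _
  -- final algebra
  have habv : a^2 + b^2 = (1 - c) - (R - Sr) := by rw [ha2, hb2]; ring
  have hDle : (R - Sr) ≤ 1 - c := by nlinarith
  have hkey : Real.sqrt (a^2+b^2) * Real.sqrt (1-c)
      = (((d:ℝ)-1)/d) * Real.sqrt (1 - ((d:ℝ)/((d:ℝ)-1)) * (R - Sr)) := by
    rw [habv, ← Real.sqrt_mul (by nlinarith)]
    have e1 : ((1 - c) - (R - Sr)) * (1 - c)
        = (((d:ℝ)-1)/d)^2 * (1 - ((d:ℝ)/((d:ℝ)-1)) * (R - Sr)) := by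
      rw [hc]; field_simp
    rw [e1, Real.sqrt_mul (sq_nonneg _), Real.sqrt_sq (by positivity)]
  calc ∑ i, r i * p i + Real.sqrt (1 - R) * Real.sqrt (1 - Sp)
      ≤ (c + a * t) + b * s := by linarith [stepA]
    _ = c + (a*t + b*s) := by ring
    _ ≤ c + Real.sqrt (a^2+b^2) * Real.sqrt (1-c) := by linarith [stepB]
    _ = 1/(d:ℝ) + (((d:ℝ)-1)/d) * Real.sqrt (1 - ((d:ℝ)/((d:ℝ)-1)) * (R - Sr)) := by
        rw [hkey, hc]

lemma diag_re_nonneg {M : Matrix n n ℂ} (hM : M.PosSemidef) (i : n) : 0 ≤ (M i i).re :=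
  (complex_nonneg_iff.mp (psd_apply_self_nonneg hM i)).1

lemma diag_im_zero {M : Matrix n n ℂ} (hM : M.PosSemidef) (i : n) : (M i i).im = 0 :=
  (complex_nonneg_iff.mp (psd_apply_self_nonneg hM i)).2

lemma trace_re_eq_sum_diag_re (M : Matrix n n ℂ) : M.trace.re = ∑ i, (M i i).re := by
  simp [Matrix.trace, Matrix.diag, Complex.re_sum]

lemma trace_mul_diag {ρ σ : Matrix n n ℂ} (hσ : σ.IsDiag) :
    (ρ * σ).trace = ∑ i, ρ i i * σ i i := by
  simp only [Matrix.trace, Matrix.diag, Matrix.mul_apply]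
  refine Finset.sum_congr rfl fun i _ => ?_
  refine Finset.sum_eq_single i (fun j _ hji => ?_) (by simp)
  rw [hσ hji, mul_zero]

lemma sum_diag_sq_le_trace_sq {ρ : Matrix n n ℂ} (hρ : ρ.PosSemidef) :
    ∑ i, ((ρ i i).re)^2 ≤ ((ρ * ρ).trace).re := by
  have herm : ∀ i j, ρ j i = (starRingEnd ℂ) (ρ i j) := by
    intro i j
    have h := congrFun (congrFun hρ.1 j) i
    rw [Matrix.conjTranspose_apply] at h
    exact h.symm
  have htr : ((ρ * ρ).trace).re = ∑ i, ∑ j, Complex.normSq (ρ i j) := by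
    simp only [Matrix.trace, Matrix.diag, Matrix.mul_apply, Complex.re_sum]
    refine Finset.sum_congr rfl fun i _ => ?_
    refine Finset.sum_congr rfl fun j _ => ?_
    rw [herm i j, Complex.mul_conj, Complex.ofReal_re]
  rw [htr]
  refine Finset.sum_le_sum fun i _ => ?_
  have h1 : ((ρ i i).re)^2 = Complex.normSq (ρ i i) := by
    rw [Complex.normSq_apply, diag_im_zero hρ i]; ring
  rw [h1]
  exact Finset.single_le_sum (fun j _ => Complex.normSq_nonneg _) (Finset.mem_univ i)

lemma fid_le {d : ℕ} (hd : 2 ≤ d) (ρ σ : Matrix (Fin d) (Fin d) ℂ)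
    (hρ : IsDensity ρ) (hσ : IsIncoherent σ) :
    fid ρ σ ≤ 1/(d:ℝ) + (((d:ℝ)-1)/d) *
      Real.sqrt (1 - ((d:ℝ)/((d:ℝ)-1)) *
        ((((ρ*ρ).trace).re - ∑ i, ((ρ i i).re)^2))) := by
  obtain ⟨hρp, hρtr⟩ := hρ
  obtain ⟨⟨hσp, hσtr⟩, hσdiag⟩ := hσ
  have hMpsd : (hσp.sqrt * ρ * hσp.sqrt).PosSemidef := by
    have h := hρp.mul_mul_conjTranspose_same hσp.sqrt
    rwa [hσp.posSemidef_sqrt.1] at h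
  have hfid : fid ρ σ = (hMpsd.sqrt.trace.re)^2 := by
    unfold fid msqrt
    rw [dif_pos hσp]; exact congrArg (fun M : Matrix (Fin d) (Fin d) ℂ => M.trace.re ^ 2) (dif_pos hMpsd)
  have hr1 : ∑ i, (ρ i i).re = 1 := by
    rw [← trace_re_eq_sum_diag_re, hρtr, Complex.one_re]
  have hp1 : ∑ i, (σ i i).re = 1 := by
    rw [← trace_re_eq_sum_diag_re, hσtr, Complex.one_re]
  have hρσ : ((ρ * σ).trace).re = ∑ i, (ρ i i).re * (σ i i).re := by
    rw [trace_mul_diag hσdiag, Complex.re_sum]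
    refine Finset.sum_congr rfl fun i _ => ?_
    rw [Complex.mul_re, diag_im_zero hρp i, diag_im_zero hσp i]
    ring
  have hσσ : ((σ * σ).trace).re = ∑ i, ((σ i i).re)^2 := by
    rw [trace_mul_diag hσdiag, Complex.re_sum]
    refine Finset.sum_congr rfl fun i _ => ?_
    rw [Complex.mul_re, diag_im_zero hσp i]
    ring
  have hRge := sum_diag_sq_le_trace_sq hρp
  have hRle : ((ρ * ρ).trace).re ≤ 1 := by
    have h := trace_sq_le hρp
    rw [hρtr] at h
    simpa using h
  have hsf := superfidelity hρp hσp hMpsd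
  rw [hρtr, hσtr] at hsf
  simp only [Complex.one_re, one_pow] at hsf
  rw [hρσ, hσσ] at hsf
  have hopt := scalar_opt hd (fun i => (ρ i i).re) (fun i => (σ i i).re)
    (diag_re_nonneg hρp) (diag_re_nonneg hσp) hr1 hp1 ((ρ*ρ).trace).re hRge hRle
  rw [hfid]
  calc (hMpsd.sqrt.trace.re)^2 ≤ _ := hsf
    _ ≤ _ := hopt


end CoherenceAux

open CoherenceAux in
/-- Lower bound on the geometric measure of coherence (Theorem 1, lower bound). -/
theorem geometric_coherence_lower_bound {d : ℕ} (hd : 2 ≤ d)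
    (ρ : Matrix (Fin d) (Fin d) ℂ) (hρ : IsDensity ρ) :
    1 - 1 / (d : ℝ) - (((d : ℝ) - 1) / d) *
      Real.sqrt (1 - ((d : ℝ) / ((d : ℝ) - 1)) *
        (((ρ * ρ).trace).re - ∑ i, ((ρ i i).re) ^ 2)) ≤ Cg ρ := by
  have hd2 : (2:ℝ) ≤ (d:ℝ) := by exact_mod_cast hd
  set T := (((d : ℝ) - 1) / d) *
      Real.sqrt (1 - ((d : ℝ) / ((d : ℝ) - 1)) *
        (((ρ * ρ).trace).re - ∑ i, ((ρ i i).re) ^ 2)) with hT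
  have hTnn : 0 ≤ T := by
    apply mul_nonneg
    · apply div_nonneg <;> linarith
    · exact Real.sqrt_nonneg _
  have hBnn : 0 ≤ 1/(d:ℝ) + T := by
    have : 0 ≤ 1/(d:ℝ) := by positivity
    linarith
  have hsup : sSup {x : ℝ | ∃ σ : Matrix (Fin d) (Fin d) ℂ, IsIncoherent σ ∧ x = fid ρ σ}
      ≤ 1/(d:ℝ) + T := by
    apply Real.sSup_le _ hBnn
    rintro x ⟨σ, hσ, rfl⟩
    exact fid_le hd ρ σ hρ hσ
  unfold Cg
  linarith
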